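/- (Two-qubit factorization law) Let |ψ^{AB}⟩ = √ω_0 |0⟩|β_0⟩ + √ω_1 |1⟩|β_1⟩ with ω_0 + ω_1 = 1 be a two-qubit state, |φ^{AB}⟩ = (1/√2)(|0⟩|β_0⟩ + |1⟩|β_1⟩), and $(X) = Σ_n F_n X F_n† a trace-preserving CP map on B. Then C̄^{A|B}(|ψ⟩) = E(|ψ⟩) · C̄^{A|B}(|φ⟩), where E(|ψ⟩) = 2√(ω_0 ω_1) is the concurrence and C̄^{A|B} is the average post-measurement l1-coherence of A over the Kraus outcomes. -/

import Mathlib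

open Matrix Kronecker BigOperators Finset ComplexOrder

noncomputable def l1Coh {d : ℕ} (ρ : Matrix (Fin d) (Fin d) ℂ) : ℝ :=
  ∑ i, ∑ j, if i ≠ j then ‖ρ i j‖ else 0

noncomputable def ptraceB {dA dB : ℕ}
    (ρ : Matrix (Fin dA × Fin dB) (Fin dA × Fin dB) ℂ) : Matrix (Fin dA) (Fin dA) ℂ :=
  fun i k => ∑ j, ρ (i, j) (k, j)

noncomputable def postA {dA dB : ℕ} (F : Matrix (Fin dB) (Fin dB) ℂ)
    (χ : Fin dA × Fin dB → ℂ) : Matrix (Fin dA) (Fin dA) ℂ :=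
  ptraceB (((1 : Matrix (Fin dA) (Fin dA) ℂ) ⊗ₖ F) * Matrix.vecMulVec χ (star χ) *
    ((1 : Matrix (Fin dA) (Fin dA) ℂ) ⊗ₖ F)ᴴ)

/-- Average remotely created coherence over the Kraus outcomes. -/
noncomputable def avgRCC {dA dB : ℕ} {ι : Type*} [Fintype ι]
    (F : ι → Matrix (Fin dB) (Fin dB) ℂ) (χ : Fin dA × Fin dB → ℂ) : ℝ :=
  ∑ n, if 0 < ((postA (F n) χ).trace).re then
      ((postA (F n) χ).trace).re *
        l1Coh (((((postA (F n) χ).trace).re : ℂ))⁻¹ • postA (F n) χ)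
    else 0


/-!
Each post-measurement operator `postA F χ` is a Gram matrix `V Vᴴ`, hence positive semidefinite,
so an outcome of probability zero has `postA F χ = 0`; together with the homogeneity of `l1Coh`
this turns the average coherence into `∑ₙ l1Coh (postA (F n) χ)`. For `χ = ∑ᵢ cᵢ |i⟩|βᵢ⟩` the
entries of `postA F χ` are `cᵢ c̄ₖ` times those for `∑ᵢ |i⟩|βᵢ⟩`, and on a qubit only the two
off-diagonal entries enter `l1Coh`, so every term scales by `|c₀| |c₁|`: this is `√(ω₀ω₁)` for `ψ`
and `1/2` for `φ`.
-/

lemma kronecker_one_mulVec_apply {dA dB : ℕ} (F : Matrix (Fin dB) (Fin dB) ℂ)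
    (χ : Fin dA × Fin dB → ℂ) (i : Fin dA) (j : Fin dB) :
    (((1 : Matrix (Fin dA) (Fin dA) ℂ) ⊗ₖ F) *ᵥ χ) (i, j) = (F *ᵥ Function.curry χ i) j := by
  simp [mulVec, dotProduct, Fintype.sum_prod_type, one_apply, ite_mul]

lemma postA_eq_mul_conjTranspose {dA dB : ℕ} (F : Matrix (Fin dB) (Fin dB) ℂ)
    (χ : Fin dA × Fin dB → ℂ) :
    postA F χ = (of fun i => F *ᵥ Function.curry χ i) * (of fun i => F *ᵥ Function.curry χ i)ᴴ := by
  ext i k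
  rw [postA, mul_vecMulVec, vecMulVec_mul, ← star_mulVec]
  simp only [ptraceB, vecMulVec_apply, Pi.star_apply, kronecker_one_mulVec_apply, mul_apply,
    conjTranspose_apply, of_apply]

lemma postA_posSemidef {dA dB : ℕ} (F : Matrix (Fin dB) (Fin dB) ℂ)
    (χ : Fin dA × Fin dB → ℂ) : (postA F χ).PosSemidef := by
  rw [postA_eq_mul_conjTranspose]
  exact posSemidef_self_mul_conjTranspose _

lemma l1Coh_smul {d : ℕ} (c : ℂ) (ρ : Matrix (Fin d) (Fin d) ℂ) :
    l1Coh (c • ρ) = ‖c‖ * l1Coh ρ := by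
  simp only [l1Coh, mul_sum, Matrix.smul_apply, smul_eq_mul, norm_mul, mul_ite, mul_zero]

lemma l1Coh_fin_two (ρ : Matrix (Fin 2) (Fin 2) ℂ) : l1Coh ρ = ‖ρ 0 1‖ + ‖ρ 1 0‖ := by
  simp [l1Coh, Fin.sum_univ_two]

lemma avgRCC_eq_sum_l1Coh {dA dB : ℕ} {ι : Type*} [Fintype ι]
    (F : ι → Matrix (Fin dB) (Fin dB) ℂ) (χ : Fin dA × Fin dB → ℂ) :
    avgRCC F χ = ∑ n, l1Coh (postA (F n) χ) := by
  refine sum_congr rfl fun n _ => ?_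
  have hρ := postA_posSemidef (F n) χ
  split_ifs with hpos
  · rw [l1Coh_smul, norm_inv, Complex.norm_real, Real.norm_of_nonneg hpos.le,
      mul_inv_cancel_left₀ hpos.ne']
  · obtain ⟨hre, him⟩ := Complex.nonneg_iff.mp hρ.trace_nonneg
    have htr : (postA (F n) χ).trace = 0 :=
      Complex.ext (le_antisymm (not_lt.mp hpos) hre) him.symm
    simp [hρ.trace_eq_zero_iff.mp htr, l1Coh]

lemma postA_apply_of_weights {dA dB : ℕ} (F : Matrix (Fin dB) (Fin dB) ℂ)
    (c : Fin dA → ℂ) (β : Fin dA → Fin dB → ℂ) {χ : Fin dA × Fin dB → ℂ}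
    (hχ : ∀ i j, χ (i, j) = c i * β i j) (i k : Fin dA) :
    postA F χ i k = c i * star (c k) * postA F (Function.uncurry β) i k := by
  have hcurry : ∀ i, Function.curry χ i = c i • β i := fun i => funext (hχ i)
  simp only [postA_eq_mul_conjTranspose, mul_apply, conjTranspose_apply, of_apply, hcurry,
    mulVec_smul, Pi.smul_apply, smul_eq_mul, star_mul', mul_sum]
  refine sum_congr rfl fun j _ => ?_
  simp only [Function.curry_uncurry]
  ring

lemma l1Coh_of_weights_fin_two {ρ ρ' : Matrix (Fin 2) (Fin 2) ℂ} (c : Fin 2 → ℂ)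
    (h : ∀ i k, ρ' i k = c i * star (c k) * ρ i k) :
    l1Coh ρ' = ‖c 0‖ * ‖c 1‖ * l1Coh ρ := by
  simp only [l1Coh_fin_two, h, norm_mul, norm_star]
  ring

lemma avgRCC_of_weights_fin_two {dB : ℕ} {ι : Type*} [Fintype ι]
    (F : ι → Matrix (Fin dB) (Fin dB) ℂ) (c : Fin 2 → ℂ) (β : Fin 2 → Fin dB → ℂ)
    {χ : Fin 2 × Fin dB → ℂ} (hχ : ∀ i j, χ (i, j) = c i * β i j) :
    avgRCC F χ = ‖c 0‖ * ‖c 1‖ * avgRCC F (Function.uncurry β) := by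
  simp only [avgRCC_eq_sum_l1Coh, mul_sum]
  exact sum_congr rfl fun n _ => l1Coh_of_weights_fin_two c (postA_apply_of_weights (F n) c β hχ)

theorem two_qubit_factorization_law_general
    {ι : Type*} [Fintype ι]
    (ω : Fin 2 → ℝ) (hω : ∀ i, 0 ≤ ω i)
    (β : Fin 2 → Fin 2 → ℂ)
    (ψ φ : Fin 2 × Fin 2 → ℂ)
    (hψ : ∀ i j, ψ (i, j) = (Real.sqrt (ω i) : ℂ) * β i j)
    (hφ : ∀ i j, φ (i, j) = ((Real.sqrt 2 : ℝ) : ℂ)⁻¹ * β i j)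
    (F : ι → Matrix (Fin 2) (Fin 2) ℂ) :
    avgRCC F ψ = (2 * Real.sqrt (ω 0 * ω 1)) * avgRCC F φ := by
  rw [avgRCC_of_weights_fin_two F (fun i => (Real.sqrt (ω i) : ℂ)) β hψ,
    avgRCC_of_weights_fin_two F (fun _ => ((Real.sqrt 2 : ℝ) : ℂ)⁻¹) β hφ]
  simp only [norm_inv, Complex.norm_real, Real.norm_of_nonneg (Real.sqrt_nonneg _),
    Real.sqrt_mul (hω 0)]
  field_simp
  rw [Real.sq_sqrt zero_le_two]

/-- Theorem 4 (two-qubit factorization law):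
`C̄^{A|B}(ψ) = E(ψ)·C̄^{A|B}(φ)` with `E(ψ) = 2√(ω₀ω₁)`. -/
theorem two_qubit_factorization_law
    {ι : Type*} [Fintype ι]
    (ω : Fin 2 → ℝ) (hω : ∀ i, 0 ≤ ω i) (hωsum : ω 0 + ω 1 = 1)
    (β : Fin 2 → Fin 2 → ℂ)
    (hβ : ∀ i k, ∑ j, (starRingEnd ℂ) (β i j) * β k j = if i = k then 1 else 0)
    (ψ φ : Fin 2 × Fin 2 → ℂ)
    (hψ : ∀ i j, ψ (i, j) = (Real.sqrt (ω i) : ℂ) * β i j)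
    (hφ : ∀ i j, φ (i, j) = ((Real.sqrt 2 : ℝ) : ℂ)⁻¹ * β i j)
    (F : ι → Matrix (Fin 2) (Fin 2) ℂ)
    (htp : ∑ n, (F n)ᴴ * (F n) = (1 : Matrix (Fin 2) (Fin 2) ℂ)) :
    avgRCC F ψ = (2 * Real.sqrt (ω 0 * ω 1)) * avgRCC F φ :=
  two_qubit_factorization_law_general ω hω β ψ φ hψ hφ F
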